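/- Let $\mathcal{C}$ be an additive idempotent complete category, $X$ an additive locally nilpotent endofunctor, $T(X)$ the free monad. An object $M \in \mathcal{C}$ is indecomposable if and only if $f_!(M) \in \mathcal{C}^{T(X)}$ is indecomposable. -/

import Mathlib

open CategoryTheory Limits

universe v u

variable {C : Type u} [Category.{v} C]

/-- The power `X^n` of an endofunctor, with `X^(n+1) = X^n ⋙ X`. -/
def fpow (X : C ⥤ C) : ℕ → (C ⥤ C)
  | 0 => 𝟭 C
  | n + 1 => fpow X n ⋙ X

/-- `X` is locally nilpotent if every object is annihilated by some power of `X`. -/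
def LocallyNilpotent (X : C ⥤ C) : Prop :=
  ∀ M : C, ∃ n : ℕ, IsZero ((fpow X n).obj M)

/-- The category `(X ⇓ Id)` of `X`-modules, identified with the Eilenberg–Moore category
of the free monad on `X`. -/
structure XMod (X : C ⥤ C) : Type max u v where
  carrier : C
  str : X.obj carrier ⟶ carrier

/-- Morphisms of `X`-modules. -/
@[ext]
structure XModHom {X : C ⥤ C} (M N : XMod X) : Type v where
  hom : M.carrier ⟶ N.carrier
  comm : M.str ≫ hom = X.map hom ≫ N.str

instance (X : C ⥤ C) : Category (XMod X) where
  Hom := XModHom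
  id M := ⟨𝟙 M.carrier, by simp⟩
  comp f g := ⟨f.hom ≫ g.hom, by
    rw [← Category.assoc, f.comm, Category.assoc, g.comm, ← Category.assoc, ← Functor.map_comp]⟩
  id_comp f := by apply XModHom.ext; simp [CategoryStruct.id, CategoryStruct.comp]
  comp_id f := by apply XModHom.ext; simp [CategoryStruct.id, CategoryStruct.comp]
  assoc f g h := by apply XModHom.ext; simp [CategoryStruct.comp]

@[simp] lemma XMod.id_hom {X : C ⥤ C} (M : XMod X) : (𝟙 M : XModHom M M).hom = 𝟙 M.carrier := rfl
@[simp] lemma XMod.comp_hom {X : C ⥤ C} {M N P : XMod X} (f : M ⟶ N) (g : N ⟶ P) :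
    (f ≫ g).hom = f.hom ≫ g.hom := rfl

/-- `F` is the free `X`-module `f₁(N)` on `N`, encoded via the universal
property of the free–forgetful adjunction `f₁ ⊣ f⋆`. -/
structure IsFreeXModOn (X : C ⥤ C) (F : XMod X) (N : C) where
  unit : N ⟶ F.carrier
  lift : ∀ (P : XMod X), (N ⟶ P.carrier) → (F ⟶ P)
  fac : ∀ (P : XMod X) (g : N ⟶ P.carrier), unit ≫ (lift P g).hom = g
  uniq : ∀ (P : XMod X) (g : N ⟶ P.carrier) (k : F ⟶ P), unit ≫ k.hom = g → k = lift P g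

/-- An object of a preadditive category is indecomposable if it is nonzero and has no
nontrivial idempotent endomorphisms (in an idempotent complete additive category this is
the usual notion). -/
def IndecObj {D : Type*} [Category D] [Preadditive D] (A : D) : Prop :=
  ¬ IsZero A ∧ ∀ e : A ⟶ A, e ≫ e = e → e = 0 ∨ e = 𝟙 A

variable [Preadditive C] {X : C ⥤ C} [X.Additive]

instance {M N : XMod X} : Zero (XModHom M N) := ⟨⟨0, by simp⟩⟩
instance {M N : XMod X} : Add (XModHom M N) :=
  ⟨fun f g => ⟨f.hom + g.hom, by
    simp [Preadditive.comp_add, Preadditive.add_comp, f.comm, g.comm]⟩⟩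
instance {M N : XMod X} : Neg (XModHom M N) :=
  ⟨fun f => ⟨-f.hom, by simp [Preadditive.comp_neg, Preadditive.neg_comp, f.comm]⟩⟩

instance {M N : XMod X} : AddCommGroup (XModHom M N) where
  add_assoc f g h := by apply XModHom.ext; exact add_assoc _ _ _
  zero_add f := by apply XModHom.ext; exact zero_add _
  add_zero f := by apply XModHom.ext; exact add_zero _
  add_comm f g := by apply XModHom.ext; exact add_comm _ _
  neg_add_cancel f := by apply XModHom.ext; exact neg_add_cancel _
  nsmul := nsmulRec
  zsmul := zsmulRec

instance : Preadditive (XMod X) where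
  homGroup M N := inferInstanceAs (AddCommGroup (XModHom M N))
  add_comp M N P f g h := by apply XModHom.ext; exact Preadditive.add_comp _ _ _ _ _ _
  comp_add M N P f g h := by apply XModHom.ext; exact Preadditive.comp_add _ _ _ _ _ _

@[simp] lemma XMod.zero_hom (M N : XMod X) : (0 : M ⟶ N).hom = 0 := rfl
@[simp] lemma XMod.add_hom {M N : XMod X} (f g : M ⟶ N) : (f + g).hom = f.hom + g.hom := rfl

/-!
The ring maps `End M → End f₁(M) → End M`, given by the free functor and by the degree-zero
component `k ↦ unit ≫ k ≫ proj`, compose to the identity. The second one kills no nonzero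
idempotent: an endomorphism with vanishing degree-zero component factors through the structure
map `X f₁(M) → f₁(M)` (because `f₁(M) ≅ M ⊕ X f₁(M)`), and an idempotent that does so factors
through every `X^n f₁(M)`, which vanishes for large `n` by local nilpotency. Hence `End M` has
only the trivial idempotents iff `End f₁(M)` does.
-/

def HasTrivialIdempotents (R : Type*) [Ring R] : Prop :=
  ∀ e : R, IsIdempotentElem e → e = 0 ∨ e = 1

namespace HasTrivialIdempotents

variable {R S : Type*} [Ring R] [Ring S]

theorem of_leftInverse (φ : R →+* S) (ψ : S →+* R) (hφψ : Function.LeftInverse φ ψ)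
    (hR : HasTrivialIdempotents R) : HasTrivialIdempotents S := fun a ha => by
  rcases hR (ψ a) (ha.map ψ) with h | h
  · exact .inl (by rw [← hφψ a, h, map_zero])
  · exact .inr (by rw [← hφψ a, h, map_one])

theorem of_ker (φ : R →+* S) (hker : ∀ e : R, IsIdempotentElem e → φ e = 0 → e = 0)
    (hS : HasTrivialIdempotents S) : HasTrivialIdempotents R := fun e he => by
  rcases hS (φ e) (he.map φ) with h | h
  · exact .inl (hker e he h)
  · have : 1 - e = 0 := hker (1 - e) he.one_sub (by rw [map_sub, map_one, h, sub_self])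
    exact .inr (sub_eq_zero.mp this).symm

end HasTrivialIdempotents

theorem indecObj_iff {D : Type*} [Category D] [Preadditive D] (A : D) :
    IndecObj A ↔ ¬ IsZero A ∧ HasTrivialIdempotents (End A) :=
  Iff.rfl

namespace XMod

def iterStr (F : XMod X) : ∀ n : ℕ, (fpow X n).obj F.carrier ⟶ F.carrier
  | 0 => 𝟙 _
  | n + 1 => X.map (iterStr F n) ≫ F.str

omit [Preadditive C] [X.Additive] in
theorem exists_eq_comp_iterStr_of_idem {F : XMod X} {e : F ⟶ F} (he : e ≫ e = e)
    {d : F.carrier ⟶ X.obj F.carrier} (hd : e.hom = d ≫ F.str) :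
    ∀ n : ℕ, ∃ h : F.carrier ⟶ (fpow X n).obj F.carrier, e.hom = h ≫ F.iterStr n
  | 0 => ⟨e.hom, (Category.comp_id _).symm⟩
  | n + 1 => by
    obtain ⟨h, hh⟩ := exists_eq_comp_iterStr_of_idem he hd n
    refine ⟨d ≫ X.map h, ?_⟩
    calc e.hom = e.hom ≫ e.hom := congrArg XModHom.hom he.symm
      _ = (d ≫ F.str) ≫ e.hom := congrArg (· ≫ e.hom) hd
      _ = d ≫ X.map h ≫ X.map (F.iterStr n) ≫ F.str := by
        rw [Category.assoc, e.comm, hh, X.map_comp, Category.assoc]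
      _ = (d ≫ X.map h) ≫ F.iterStr (n + 1) := (Category.assoc _ _ _).symm

theorem eq_zero_of_idem_of_factors_str (hX : LocallyNilpotent X) {F : XMod X} {e : F ⟶ F}
    (he : e ≫ e = e) {d : F.carrier ⟶ X.obj F.carrier} (hd : e.hom = d ≫ F.str) : e = 0 := by
  obtain ⟨n, hn⟩ := hX F.carrier
  obtain ⟨h, hh⟩ := exists_eq_comp_iterStr_of_idem he hd n
  apply XModHom.ext
  rw [hh, hn.eq_of_tgt h 0, zero_comp, zero_hom]

abbrev trivial (M : C) : XMod X := ⟨M, 0⟩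

def trivialHom {M N : C} (a : M ⟶ N) : (trivial M : XMod X) ⟶ trivial N :=
  ⟨a, by simp [trivial]⟩

end XMod

namespace IsFreeXModOn

variable {M : C} {F : XMod X} (hF : IsFreeXModOn X F M)

omit [Preadditive C] [X.Additive] in
theorem hom_ext {P : XMod X} {f g : F ⟶ P} (h : hF.unit ≫ f.hom = hF.unit ≫ g.hom) :
    f = g :=
  (hF.uniq P _ f h).trans (hF.uniq P _ g rfl).symm

def proj : F ⟶ XMod.trivial M :=
  hF.lift _ (𝟙 M)

omit [X.Additive] in
@[simp]
theorem unit_proj : hF.unit ≫ hF.proj.hom = 𝟙 M :=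
  hF.fac (XMod.trivial M) (𝟙 M)

omit [X.Additive] in
theorem hom_comp_proj {M' : C} {F' : XMod X} (hF' : IsFreeXModOn X F' M') (k : F ⟶ F') :
    k.hom ≫ hF'.proj.hom = hF.proj.hom ≫ hF.unit ≫ k.hom ≫ hF'.proj.hom := by
  have : k ≫ hF'.proj = hF.proj ≫ XMod.trivialHom (hF.unit ≫ k.hom ≫ hF'.proj.hom) :=
    hF.hom_ext (by simp [XMod.trivialHom, ← Category.assoc])
  exact congrArg XModHom.hom this

theorem isZero_iff (hF : IsFreeXModOn X F M) : IsZero M ↔ IsZero F := by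
  simp only [IsZero.iff_id_eq_zero]
  constructor
  · intro h
    exact hF.hom_ext (by rw [← Category.id_comp hF.unit, h]; simp)
  · intro h
    rw [← hF.unit_proj, ← Category.id_comp hF.proj.hom, ← XMod.id_hom, h]
    simp

omit [X.Additive] in
/-- The summand `X F` comes from the module `M ⊞ X F` with action `X (unit, str) ≫ inr`:
`(unit, str)` is a module map out of it, split by the map induced by `inl`. -/
theorem exists_id_eq_proj_unit_add_str [HasBinaryBiproduct M (X.obj F.carrier)] :
    ∃ s : F.carrier ⟶ X.obj F.carrier, hF.proj.hom ≫ hF.unit + s ≫ F.str = 𝟙 F.carrier := by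
  let G : XMod X := ⟨M ⊞ X.obj F.carrier, X.map (biprod.desc hF.unit F.str) ≫ biprod.inr⟩
  let u : F ⟶ G := hF.lift G biprod.inl
  let v : G ⟶ F := ⟨biprod.desc hF.unit F.str, by simp [G]⟩
  let fst : G ⟶ XMod.trivial M := ⟨biprod.fst, by simp [G, XMod.trivial]⟩
  have hu : hF.unit ≫ u.hom = biprod.inl := hF.fac G biprod.inl
  have huv : u ≫ v = 𝟙 F := hF.hom_ext (by simp [v, ← Category.assoc, hu])
  have hufst : u ≫ fst = hF.proj := hF.hom_ext (by simp [fst, ← Category.assoc, hu])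
  refine ⟨u.hom ≫ biprod.snd, ?_⟩
  calc hF.proj.hom ≫ hF.unit + (u.hom ≫ biprod.snd) ≫ F.str
      = u.hom ≫ (biprod.fst ≫ hF.unit + biprod.snd ≫ F.str) := by
        rw [← hufst]; simp [fst]
    _ = (u ≫ v).hom := by rw [XMod.comp_hom, ← biprod.desc_eq]
    _ = 𝟙 F.carrier := by rw [huv, XMod.id_hom]

/-- The degree-zero component of an endomorphism of `f₁(M)`. -/
def baseEnd : End F →+* End M where
  toFun k := hF.unit ≫ k.hom ≫ hF.proj.hom
  map_one' := by
    change hF.unit ≫ 𝟙 F.carrier ≫ _ = 𝟙 M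
    rw [Category.id_comp, unit_proj]
  map_mul' k l := by
    change hF.unit ≫ (l ≫ k).hom ≫ _ = (hF.unit ≫ l.hom ≫ _) ≫ hF.unit ≫ k.hom ≫ _
    simp only [XMod.comp_hom, Category.assoc]
    rw [← hF.hom_comp_proj hF k]
  map_zero' := by
    change hF.unit ≫ (0 : F ⟶ F).hom ≫ _ = 0
    simp
  map_add' k l := by
    change hF.unit ≫ (k + l : F ⟶ F).hom ≫ _ = hF.unit ≫ k.hom ≫ _ + hF.unit ≫ l.hom ≫ _
    rw [XMod.add_hom, Preadditive.add_comp, Preadditive.comp_add]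

def freeEnd : End M →+* End F where
  toFun a := hF.lift F (a ≫ hF.unit)
  map_one' := (hF.uniq F _ _ (by simp)).symm
  map_mul' a b := (hF.uniq F _ _ (by
    rw [End.mul_def, End.mul_def, XMod.comp_hom, ← Category.assoc, hF.fac, Category.assoc,
      hF.fac, Category.assoc])).symm
  map_zero' := (hF.uniq F _ _ (by simp)).symm
  map_add' a b := (hF.uniq F _ _ (by
    change hF.unit ≫ (_ + _ : F ⟶ F).hom = _
    rw [XMod.add_hom, Preadditive.comp_add, hF.fac, hF.fac, Preadditive.add_comp])).symm

theorem baseEnd_freeEnd : Function.LeftInverse hF.baseEnd hF.freeEnd := fun a => by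
  change hF.unit ≫ (hF.lift F (a ≫ hF.unit)).hom ≫ hF.proj.hom = a
  rw [← Category.assoc, hF.fac, Category.assoc, unit_proj, Category.comp_id]

theorem eq_zero_of_baseEnd_eq_zero [HasBinaryBiproduct M (X.obj F.carrier)]
    (hX : LocallyNilpotent X) (e : End F) (he : IsIdempotentElem e) (h0 : hF.baseEnd e = 0) : e = 0 := by
  have hep : e.hom ≫ hF.proj.hom = 0 := by
    rw [hF.hom_comp_proj hF e]
    exact (congrArg (hF.proj.hom ≫ ·) h0).trans comp_zero
  obtain ⟨s, hs⟩ := hF.exists_id_eq_proj_unit_add_str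
  refine XMod.eq_zero_of_idem_of_factors_str hX he (d := e.hom ≫ s) ?_
  calc e.hom = e.hom ≫ (hF.proj.hom ≫ hF.unit + s ≫ F.str) := by rw [hs, Category.comp_id]
    _ = (e.hom ≫ s) ≫ F.str := by
      rw [Preadditive.comp_add, reassoc_of% hep, zero_comp, zero_add, Category.assoc]

end IsFreeXModOn

theorem indecomposable_iff_free_indecomposable
    [HasFiniteBiproducts C]
    (hX : LocallyNilpotent X)
    (M : C) (F : XMod X) (hF : IsFreeXModOn X F M) :
    IndecObj M ↔ IndecObj F := by
  have : HasBinaryBiproducts C := hasBinaryBiproducts_of_finite_biproducts C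
  rw [indecObj_iff, indecObj_iff, hF.isZero_iff]
  refine and_congr_right fun _ => ⟨fun hM => ?_, fun hF' => ?_⟩
  · exact hM.of_ker hF.baseEnd (hF.eq_zero_of_baseEnd_eq_zero hX)
  · exact hF'.of_leftInverse hF.baseEnd hF.freeEnd hF.baseEnd_freeEnd
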